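/- Let $n \ge 2$, let $\hat{a}_1, \dots, \hat{a}_n, \hat{b}_1, \dots, \hat{b}_n > 0$, and suppose for each $i$ that $\sum_{j \ne i} \psi(\hat{a}_i + \hat{b}_j) - (n-1)\psi(\hat{a}_i) + R_i = 0$ and $\sum_{i \ne j} \psi(\hat{a}_i + \hat{b}_j) - (n-1)\psi(\hat{b}_j) + C_j = 0$. Let $M = \max\{\max_i(-R_i/(n-1)), \max_i(-C_i/(n-1))\}$, assume $M > \ln 2$, and let $\varepsilon > 0$ satisfy $\psi(2\varepsilon) - \psi(\varepsilon) = M$. Then $\hat{a}_i \ge \varepsilon$ and $\hat{b}_i \ge \varepsilon$ for all $i$. -/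

import Mathlib

/-!
By Legendre's duplication formula, `ψ(2x) - ψ(x) = log 2 + (ψ(x + 1/2) - ψ(x)) / 2`, and the
recurrence `ψ(x + 1) = ψ(x) + 1/x` telescopes `ψ(x + 1/2) - ψ(x)` into
`∑ₖ (1/(x + k) - 1/(x + k + 1/2))`, a series whose terms strictly decrease in `x`; hence
`ψ(2x) - ψ(x)` is strictly decreasing on `(0, ∞)`. Let `m` be the smallest of all `aᵢ`, `bⱼ`.
If `m = aᵢ`, every `ψ(aᵢ + bⱼ)` is at least `ψ(2m)`, so the `i`-th likelihood equation gives
`(n - 1)(ψ(2m) - ψ(m)) ≤ -Rᵢ`; symmetrically for a column. Thus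
`ψ(2m) - ψ(m) ≤ M = ψ(2ε) - ψ(ε)`, and monotonicity gives `ε ≤ m`.
-/

open Finset

/-- The digamma function `ψ = Γ'/Γ`, as the derivative of `log ∘ Γ` on `(0,∞)`. -/
noncomputable def digamma (x : ℝ) : ℝ := deriv (fun y => Real.log (Real.Gamma y)) x

open Real Filter Topology

lemma cast_card_univ_sdiff_singleton {n : ℕ} (i : Fin n) :
    (((univ \ {i}).card : ℕ) : ℝ) = n - 1 := by
  rw [card_sdiff_of_subset (subset_univ _), card_univ, Fintype.card_fin, card_singleton,
    Nat.cast_sub (Fin.pos i)]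
  simp

lemma hasDerivAt_log_Gamma {x : ℝ} (hx : 0 < x) :
    HasDerivAt (fun y => log (Gamma y)) (digamma x) x :=
  ((differentiableAt_Gamma fun m => by linarith [(Nat.cast_nonneg m : (0 : ℝ) ≤ m)]).log
    (Gamma_pos_of_pos hx).ne').hasDerivAt

lemma digamma_le_digamma {x y : ℝ} (hx : 0 < x) (hxy : x ≤ y) : digamma x ≤ digamma y :=
  convexOn_log_Gamma.monotoneOn_deriv (fun _ hz => (hasDerivAt_log_Gamma hz).differentiableAt)
    hx (hx.trans_le hxy) hxy

lemma digamma_add_one {x : ℝ} (hx : 0 < x) : digamma (x + 1) = digamma x + x⁻¹ := by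
  have hlog : (fun y => log (Gamma (y + 1))) =ᶠ[𝓝 x] fun y => log y + log (Gamma y) := by
    filter_upwards [eventually_gt_nhds hx] with y hy
    rw [Gamma_add_one hy.ne', log_mul hy.ne' (Gamma_pos_of_pos hy).ne']
  refine ((hasDerivAt_log_Gamma (by linarith)).comp_add_const x 1).unique ?_
  simpa only [add_comm] using
    (hlog.hasDerivAt_iff).2 ((hasDerivAt_log hx.ne').add (hasDerivAt_log_Gamma hx))

lemma digamma_add_digamma_add_half {x : ℝ} (hx : 0 < x) :
    digamma x + digamma (x + 1 / 2) = 2 * digamma (2 * x) - 2 * log 2 := by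
  have hlog : (fun y => log (Gamma y) + log (Gamma (y + 1 / 2))) =ᶠ[𝓝 x]
      fun y => log (Gamma (2 * y)) + ((1 - 2 * y) * log 2 + log √π) := by
    filter_upwards [eventually_gt_nhds hx] with y hy
    have hdup := congrArg log (Gamma_mul_Gamma_add_half_of_pos hy)
    rwa [log_mul (Gamma_pos_of_pos hy).ne' (Gamma_pos_of_pos (by linarith)).ne',
      log_mul (by positivity) (by positivity), log_mul (Gamma_pos_of_pos (by linarith)).ne'
      (by positivity), log_rpow two_pos, add_assoc] at hdup
  have hleft := (hasDerivAt_log_Gamma hx).add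
    ((hasDerivAt_log_Gamma (by linarith)).comp_add_const x (1 / 2))
  have hright := (((hasDerivAt_log_Gamma (by linarith : 0 < 2 * x)).comp x
    ((hasDerivAt_id x).const_mul 2)).add
    ((((hasDerivAt_id x).const_mul 2).const_sub 1).mul_const (log 2) |>.add_const (log √π)))
  have hderiv := ((hlog.hasDerivAt_iff).1 hleft).unique hright
  linarith

lemma one_div_sub_one_div_add_half_lt {u v : ℝ} (hu : 0 < u) (huv : u < v) :
    1 / v - 1 / (v + 1 / 2) < 1 / u - 1 / (u + 1 / 2) := by
  have hv : 0 < v := hu.trans huv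
  have hform : ∀ w : ℝ, 0 < w → 1 / w - 1 / (w + 1 / 2) = 1 / (2 * w * (w + 1 / 2)) := by
    intro w hw
    field_simp
    ring
  rw [hform u hu, hform v hv]
  exact one_div_lt_one_div_of_lt (by positivity) (by nlinarith)

-- `ψ(x + 1/2) - ψ(x)` lies in `[0, 1/x]`, so the telescoped recurrence converges.
lemma hasSum_digamma_add_half_sub_digamma {x : ℝ} (hx : 0 < x) :
    HasSum (fun k : ℕ => 1 / (x + k) - 1 / (x + k + 1 / 2))
      (digamma (x + 1 / 2) - digamma x) := by
  set h : ℝ → ℝ := fun y => digamma (y + 1 / 2) - digamma y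
  have hpos : ∀ k : ℕ, 0 < x + k := fun k => by positivity
  have hstep : ∀ k : ℕ,
      h (x + k) - h (x + (k + 1 : ℕ)) = 1 / (x + k) - 1 / (x + k + 1 / 2) := by
    intro k
    have h1 := digamma_add_one (hpos k)
    have h2 := digamma_add_one (by linarith [hpos k] : 0 < x + k + 1 / 2)
    simp only [h, Nat.cast_succ]
    rw [show x + (k + 1) + 1 / 2 = x + k + 1 / 2 + 1 by ring, ← add_assoc, h1, h2]
    ring
  have htail : Tendsto (fun N : ℕ => h (x + N)) atTop (𝓝 0) := by
    refine squeeze_zero (g := fun N : ℕ => 1 / (x + N))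
      (fun N => sub_nonneg.2 (digamma_le_digamma (hpos N) (by linarith))) (fun N => ?_)
      (tendsto_const_nhds.div_atTop (tendsto_atTop_add_const_left _ x tendsto_natCast_atTop_atTop))
    have hrec := digamma_add_one (hpos N)
    have hmono := digamma_le_digamma (by linarith [hpos N] : 0 < x + N + 1 / 2)
      (by linarith : x + N + 1 / 2 ≤ x + N + 1)
    simp only [h, one_div]
    linarith
  rw [hasSum_iff_tendsto_nat_of_nonneg
    (fun k => sub_nonneg.2 (one_div_le_one_div_of_le (hpos k) (by linarith)))]
  simp_rw [← hstep, sum_range_sub', Nat.cast_zero, add_zero]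
  simpa only [sub_zero] using tendsto_const_nhds.sub htail

lemma strictAntiOn_digamma_add_half_sub_digamma :
    StrictAntiOn (fun x => digamma (x + 1 / 2) - digamma x) (Set.Ioi 0) := by
  intro x (hx : 0 < x) y (hy : 0 < y) hxy
  exact hasSum_lt (i := 0)
    (fun k => (one_div_sub_one_div_add_half_lt (by positivity) (by linarith)).le)
    (one_div_sub_one_div_add_half_lt (by simpa using hx) (by simpa using hxy))
    (hasSum_digamma_add_half_sub_digamma hy) (hasSum_digamma_add_half_sub_digamma hx)

lemma strictAntiOn_digamma_two_mul_sub_digamma :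
    StrictAntiOn (fun x => digamma (2 * x) - digamma x) (Set.Ioi 0) := by
  intro x (hx : 0 < x) y (hy : 0 < y) hxy
  have hhalf := strictAntiOn_digamma_add_half_sub_digamma hx hy hxy
  simp only at hhalf ⊢
  linarith [digamma_add_digamma_add_half hx, digamma_add_digamma_add_half hy]

lemma digamma_two_mul_sub_digamma_le_of_sum_eq {n : ℕ} (hn : 2 ≤ n) {i : Fin n}
    {z : Fin n → ℝ} {x r : ℝ} (hx : 0 < x) (hz : ∀ j, 2 * x ≤ z j)
    (heq : ∑ j ∈ univ \ {i}, digamma (z j) - (n - 1) * digamma x + r = 0) :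
    digamma (2 * x) - digamma x ≤ -r / (n - 1) := by
  have hn1 : (0 : ℝ) < n - 1 := by
    have : (2 : ℝ) ≤ n := by exact_mod_cast hn
    linarith
  have hsum := (univ \ {i}).card_nsmul_le_sum (fun j => digamma (z j)) (digamma (2 * x))
    fun j _ => digamma_le_digamma (by positivity) (hz j)
  rw [nsmul_eq_mul, cast_card_univ_sdiff_singleton] at hsum
  rw [le_div_iff₀' hn1]
  linarith

theorem mle_solution_lower_bound_general (n : ℕ) (hn : 2 ≤ n)
    (a b R C : Fin n → ℝ)
    (ha : ∀ i, 0 < a i) (hb : ∀ i, 0 < b i)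
    (hMLa : ∀ i, ∑ j ∈ univ \ {i}, digamma (a i + b j) - (n - 1) * digamma (a i) + R i = 0)
    (hMLb : ∀ j, ∑ i ∈ univ \ {j}, digamma (a i + b j) - (n - 1) * digamma (b j) + C j = 0)
    (M : ℝ)
    (hne : (univ : Finset (Fin n)).Nonempty)
    (hM : M = max ((univ : Finset (Fin n)).sup' hne (fun i => -R i / (n - 1)))
      ((univ : Finset (Fin n)).sup' hne (fun i => -C i / (n - 1))))
    (ε : ℝ) (hεM : digamma (2 * ε) - digamma ε = M) :
    (∀ i, ε ≤ a i) ∧ (∀ i, ε ≤ b i) := by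
  set m := min (univ.inf' hne a) (univ.inf' hne b)
  have hma : ∀ i, m ≤ a i := fun i => (min_le_left _ _).trans (inf'_le a (mem_univ i))
  have hmb : ∀ j, m ≤ b j := fun j => (min_le_right _ _).trans (inf'_le b (mem_univ j))
  have hm : 0 < m :=
    lt_min ((lt_inf'_iff hne).2 fun i _ => ha i) ((lt_inf'_iff hne).2 fun j _ => hb j)
  have hmM : digamma (2 * m) - digamma m ≤ M := by
    rw [hM]
    rcases min_choice (univ.inf' hne a) (univ.inf' hne b) with hmin | hmin
    · obtain ⟨i, -, hi⟩ := exists_mem_eq_inf' hne a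
      rw [show m = a i from hmin.trans hi] at hmb ⊢
      exact le_max_of_le_left <| (digamma_two_mul_sub_digamma_le_of_sum_eq hn (ha i)
        (fun j => by linarith [hmb j]) (hMLa i)).trans
        (le_sup' (fun i => -R i / (n - 1)) (mem_univ i))
    · obtain ⟨j, -, hj⟩ := exists_mem_eq_inf' hne b
      rw [show m = b j from hmin.trans hj] at hma ⊢
      exact le_max_of_le_right <| (digamma_two_mul_sub_digamma_le_of_sum_eq hn (hb j)
        (fun i => by linarith [hma i]) (hMLb j)).trans
        (le_sup' (fun j => -C j / (n - 1)) (mem_univ j))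
  have hεm : ε ≤ m := not_lt.1 fun hlt =>
    (strictAntiOn_digamma_two_mul_sub_digamma hm (hm.trans hlt) hlt).not_ge (hmM.trans hεM.ge)
  exact ⟨fun i => hεm.trans (hma i), fun j => hεm.trans (hmb j)⟩

theorem mle_solution_lower_bound (n : ℕ) (hn : 2 ≤ n)
    (a b R C : Fin n → ℝ)
    (ha : ∀ i, 0 < a i) (hb : ∀ i, 0 < b i)
    (hMLa : ∀ i, ∑ j ∈ univ \ {i}, digamma (a i + b j) - (n - 1) * digamma (a i) + R i = 0)
    (hMLb : ∀ j, ∑ i ∈ univ \ {j}, digamma (a i + b j) - (n - 1) * digamma (b j) + C j = 0)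
    (M : ℝ)
    (hne : (univ : Finset (Fin n)).Nonempty)
    (hM : M = max ((univ : Finset (Fin n)).sup' hne (fun i => -R i / (n - 1)))
      ((univ : Finset (Fin n)).sup' hne (fun i => -C i / (n - 1))))
    (hMgt : Real.log 2 < M)
    (ε : ℝ) (hε : 0 < ε) (hεM : digamma (2 * ε) - digamma ε = M) :
    (∀ i, ε ≤ a i) ∧ (∀ i, ε ≤ b i) :=
  mle_solution_lower_bound_general n hn a b R C ha hb hMLa hMLb M hne hM ε hεM
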